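/- arXiv:1610.03044 — 3 statements merged into one kernel-verified Lean document; each statement's English description precedes it below -/
import Mathlib

section
/- For every E₀ > 0 and A > 0 there exists M > 0 such that: for all ε ∈ (0, E₀] and a ∈ [0, A], every C² solution u of ε² u''(x) + μ(x) u(x) − u(x)³ + ε a f(x) = 0 on ℝ with u(x) → 0 as x → +∞ and as x → −∞ satisfies |u(x)| ≤ M for all x ∈ ℝ. -/
open MeasureTheory Filter Topology Set

/-- The energy functional `E_{ε,a}`. -/
noncomputable def energy (μ f : ℝ → ℝ) (ε a : ℝ) (u : ℝ → ℝ) : ℝ :=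
  ∫ x : ℝ, (ε / 2 * (deriv u x) ^ 2 - 1 / (2 * ε) * μ x * (u x) ^ 2
    + 1 / (4 * ε) * (u x) ^ 4 - a * f x * u x)

/-- Membership in `H¹(ℝ)`: differentiable with `u, u' ∈ L²(ℝ)`. -/
def InH1 (u : ℝ → ℝ) : Prop :=
  Differentiable ℝ u ∧ MeasureTheory.MemLp u 2 ∧ MeasureTheory.MemLp (deriv u) 2

/-- Standing hypotheses on `μ` and `f`. -/
structure Hyp (μ f : ℝ → ℝ) (ξ : ℝ) : Prop where
  μ_C1 : ContDiff ℝ 1 μ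
  μ_bdd : ∃ M, ∀ x, |μ x| ≤ M
  μ_even : ∀ x, μ (-x) = μ x
  μ_deriv_neg : ∀ x, 0 < x → deriv μ x < 0
  ξ_pos : 0 < ξ
  μ_ξ : μ ξ = 0
  ξ_unique : ∀ x, 0 < x → μ x = 0 → x = ξ
  f_cont : Continuous f
  f_odd : ∀ x, f (-x) = -f x
  f_int : MeasureTheory.Integrable f
  f_bdd : ∃ M, ∀ x, |f x| ≤ M
  f_pos : ∀ x, 0 < x → 0 < f x

/-- `v` is a global minimizer of `E_{ε,a}` over `H¹(ℝ)`. -/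
def IsMinimizer (μ f : ℝ → ℝ) (ε a : ℝ) (v : ℝ → ℝ) : Prop :=
  InH1 v ∧ ∀ u : ℝ → ℝ, InH1 u → energy μ f ε a v ≤ energy μ f ε a u

/-!
Maximum principle. Since `u` is continuous and vanishes at `±∞`, `|u|` attains its maximum at
some `c`, where `u c * u'' c ≤ 0`. Multiplying the equation at `c` by `u c` then gives
`|u c| ^ 4 ≤ ‖μ‖∞ |u c| ^ 2 + E₀ A ‖f‖∞ |u c|`, which bounds `|u c|` independently of `ε`, `a`, `u`.
-/

theorem IsLocalMax.deriv_deriv_nonpos {f : ℝ → ℝ} {x₀ : ℝ} (h : IsLocalMax f x₀)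
    (hc : ContinuousAt f x₀) : deriv (deriv f) x₀ ≤ 0 := by
  by_contra! hpos
  have hmin : IsLocalMin f x₀ := isLocalMin_of_deriv_deriv_pos hpos h.deriv_eq_zero hc
  have hconst : f =ᶠ[𝓝 x₀] fun _ ↦ f x₀ := by
    filter_upwards [h, hmin] with x hmax hmin using le_antisymm hmax hmin
  have : deriv (deriv f) x₀ = 0 := by simpa using hconst.deriv.deriv_eq
  exact hpos.ne' this

theorem IsLocalMin.deriv_deriv_nonneg {f : ℝ → ℝ} {x₀ : ℝ} (h : IsLocalMin f x₀)
    (hc : ContinuousAt f x₀) : 0 ≤ deriv (deriv f) x₀ := by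
  have hneg : deriv (fun x ↦ -f x) = fun x ↦ -deriv f x := funext fun _ ↦ deriv.neg
  have := h.neg.deriv_deriv_nonpos hc.neg
  rw [hneg, show (fun x ↦ -deriv f x) = -deriv f from rfl, deriv.neg] at this
  linarith

theorem mul_deriv_deriv_nonpos_of_isLocalMax_abs {u : ℝ → ℝ} {c : ℝ}
    (h : IsLocalMax (fun x ↦ |u x|) c) (hc : ContinuousAt u c) :
    u c * deriv (deriv u) c ≤ 0 := by
  rcases le_or_gt 0 (u c) with hnonneg | hneg
  · have hmax : IsLocalMax u c := by
      filter_upwards [h] with x hx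
      rw [abs_of_nonneg hnonneg] at hx
      exact (le_abs_self _).trans hx
    exact mul_nonpos_of_nonneg_of_nonpos hnonneg (hmax.deriv_deriv_nonpos hc)
  · have hmin : IsLocalMin u c := by
      filter_upwards [h] with x hx
      rw [abs_of_neg hneg] at hx
      linarith [neg_abs_le (u x)]
    exact mul_nonpos_of_nonpos_of_nonneg hneg.le (hmin.deriv_deriv_nonneg hc)

theorem Continuous.exists_forall_norm_le_of_tendsto_cocompact {X E : Type*} [TopologicalSpace X]
    [Nonempty X] [NormedAddCommGroup E] {u : X → E} (hu : Continuous u)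
    (hlim : Tendsto u (cocompact X) (𝓝 0)) : ∃ c, ∀ y, ‖u y‖ ≤ ‖u c‖ := by
  by_cases hzero : ∀ x, u x = 0
  · exact ⟨Classical.arbitrary X, fun y ↦ by simp [hzero]⟩
  obtain ⟨x₀, hx₀⟩ := not_forall.mp hzero
  have hnorm : Tendsto (fun x ↦ ‖u x‖) (cocompact X) (𝓝 0) := by simpa using hlim.norm
  exact hu.norm.exists_forall_ge' x₀ (hnorm.eventually (eventually_le_nhds (norm_pos_iff.mpr hx₀)))

theorem le_of_pow_four_le {t C K : ℝ} (ht : 0 ≤ t) (hC : 0 ≤ C) (hK : 0 ≤ K)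
    (h : t ^ 4 ≤ C * t ^ 2 + K * t) : t ≤ 1 + C + K := by
  by_contra! hlt
  have ht1 : 1 ≤ t := by linarith
  have ht2 : 0 < t ^ 2 := by positivity
  refine h.not_gt ?_
  calc t ^ 4 = t ^ 3 * t := by ring
    _ ≥ t ^ 3 * 1 := mul_le_mul_of_nonneg_left ht1 (by positivity)
    _ = t * t ^ 2 := by ring
    _ > (C + K) * t ^ 2 := mul_lt_mul_of_pos_right (by linarith) ht2
    _ ≥ C * t ^ 2 + K * t := by nlinarith [mul_le_mul_of_nonneg_left ht1 (mul_nonneg hK ht)]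

theorem abs_le_of_deriv_deriv_eq {u μ g : ℝ → ℝ} {ε Cμ K : ℝ} (hu : Continuous u)
    (hlim : Tendsto u (cocompact ℝ) (𝓝 0)) (hμ : ∀ x, |μ x| ≤ Cμ) (hg : ∀ x, |g x| ≤ K)
    (heq : ∀ x, ε ^ 2 * deriv (deriv u) x + μ x * u x - u x ^ 3 + g x = 0) (x : ℝ) :
    |u x| ≤ 1 + Cμ + K := by
  obtain ⟨c, hc⟩ := hu.exists_forall_norm_le_of_tendsto_cocompact hlim
  have hmax : IsLocalMax (fun x ↦ |u x|) c := Eventually.of_forall hc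
  have hsign := mul_deriv_deriv_nonpos_of_isLocalMax_abs hmax hu.continuousAt
  have hCμ : 0 ≤ Cμ := (abs_nonneg _).trans (hμ 0)
  have hK : 0 ≤ K := (abs_nonneg _).trans (hg 0)
  -- multiplying the equation at `c` by `u c` makes the second-order term nonpositive
  have hquartic : |u c| ^ 4 ≤ Cμ * |u c| ^ 2 + K * |u c| := by
    have hμc : μ c * u c ^ 2 ≤ Cμ * |u c| ^ 2 := by
      rw [sq_abs]; exact mul_le_mul_of_nonneg_right (le_of_abs_le (hμ c)) (sq_nonneg _)
    have hgc : g c * u c ≤ K * |u c| := by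
      calc g c * u c ≤ |g c * u c| := le_abs_self _
        _ = |g c| * |u c| := abs_mul _ _
        _ ≤ K * |u c| := mul_le_mul_of_nonneg_right (hg c) (abs_nonneg _)
    have hpow : |u c| ^ 4 = u c ^ 4 := Even.pow_abs (by decide) _
    have := congrArg (· * u c) (heq c)
    nlinarith [sq_nonneg ε]
  exact (hc x).trans (le_of_pow_four_le (abs_nonneg _) hCμ hK hquartic)

theorem stmt10_general (μ f : ℝ → ℝ) (ξ : ℝ) (h : Hyp μ f ξ)
    (E₀ A : ℝ) :
    ∃ M > (0:ℝ), ∀ ε a : ℝ, 0 < ε → ε ≤ E₀ → 0 ≤ a → a ≤ A →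
      ∀ u : ℝ → ℝ, ContDiff ℝ 2 u →
        (∀ x : ℝ, ε ^ 2 * deriv (deriv u) x + μ x * u x - (u x) ^ 3 + ε * a * f x = 0) →
        Filter.Tendsto u Filter.atTop (𝓝 0) →
        Filter.Tendsto u Filter.atBot (𝓝 0) →
        ∀ x : ℝ, |u x| ≤ M := by
  obtain ⟨Cμ, hCμ⟩ := h.μ_bdd
  obtain ⟨Cf, hCf⟩ := h.f_bdd
  have hCμ₀ : 0 ≤ Cμ := (abs_nonneg _).trans (hCμ 0)
  have hCf₀ : 0 ≤ Cf := (abs_nonneg _).trans (hCf 0)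
  refine ⟨1 + Cμ + |E₀ * A| * Cf, by nlinarith [abs_nonneg (E₀ * A)], ?_⟩
  intro ε a hε hεE ha haA u hu heq htop hbot
  have hlim : Tendsto u (cocompact ℝ) (𝓝 0) := by
    rw [cocompact_eq_atBot_atTop]
    exact hbot.sup htop
  have hεa : |ε * a| ≤ |E₀ * A| := by
    rw [abs_mul, abs_mul]
    exact mul_le_mul (abs_le_abs_of_nonneg hε.le hεE) (abs_le_abs_of_nonneg ha haA)
      (abs_nonneg _) (abs_nonneg _)
  have hforce (x : ℝ) : |ε * a * f x| ≤ |E₀ * A| * Cf := by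
    rw [abs_mul]
    exact mul_le_mul hεa (hCf x) (abs_nonneg _) (abs_nonneg _)
  exact abs_le_of_deriv_deriv_eq hu.continuous hlim hCμ hforce heq

/-- Uniform bound: solutions of the Euler–Lagrange equation tending to `0` at `±∞` are
uniformly bounded for `ε ∈ (0, E₀]` and `a ∈ [0, A]`. -/
theorem stmt10 (μ f : ℝ → ℝ) (ξ : ℝ) (h : Hyp μ f ξ)
    (E₀ A : ℝ) (hE₀ : 0 < E₀) (hA : 0 < A) :
    ∃ M > (0:ℝ), ∀ ε a : ℝ, 0 < ε → ε ≤ E₀ → 0 ≤ a → a ≤ A →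
      ∀ u : ℝ → ℝ, ContDiff ℝ 2 u →
        (∀ x : ℝ, ε ^ 2 * deriv (deriv u) x + μ x * u x - (u x) ^ 3 + ε * a * f x = 0) →
        Filter.Tendsto u Filter.atTop (𝓝 0) →
        Filter.Tendsto u Filter.atBot (𝓝 0) →
        ∀ x : ℝ, |u x| ≤ M :=
  stmt10_general μ f ξ h E₀ A
end

section
/- For every A > 0 there exist ε₀ > 0 and K > 0 such that: for all ε ∈ (0, ε₀] and a ∈ [0, A], every C² solution u of ε² u''(x) + μ(x) u(x) − u(x)³ + ε a f(x) = 0 on ℝ with u(x) → 0 as x → ±∞ satisfies |u(x)| ≤ K·( √(max(μ(x), 0)) + ε^{1/3} ) for all x ∈ ℝ. -/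
open MeasureTheory Filter Topology Set

/-!
Put `ν = ε^{2/3}` and `P = max(μ, 0)`. By the equation, `v = u²` satisfies `ν² v'' ≥ v` wherever
`v > P + C ν`: there the cubic term dominates both `μ u²` and the forcing `ε a f u`. On a
component `(α, β)` of that region, comparison with `v(α) e^{(α-x)/ν} + v(β) e^{(x-β)/ν}`
shows that `v` decays from the endpoint values at rate `1/ν`. Since `P` is Lipschitz, the
endpoint values exceed `P(x) + C ν` by at most `K |x - α|`, and `s e^{-s/ν} ≤ ν`; hence
`u² ≤ 2 (P + (C + K) ν)`, and the bound follows by taking square roots.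
-/

open scoped NNReal
open Real

theorem LipschitzOnWith.lipschitzWith_max_zero_of_nonpos_off_Ioo {g : ℝ → ℝ} {K : ℝ≥0}
    {a b : ℝ} (hab : a ≤ b) (hg : LipschitzOnWith K g (Icc a b))
    (hout : ∀ x ∉ Ioo a b, g x ≤ 0) :
    LipschitzWith K fun x => max (g x) 0 := by
  have hclamp : ∀ x, max (g (projIcc a b hab x)) 0 = max (g x) 0 := by
    intro x
    by_cases hx : x ∈ Icc a b
    · rw [projIcc_of_mem hab hx]
    have hx' : x ∉ Ioo a b := fun h => hx (Ioo_subset_Icc_self h)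
    rw [max_eq_right (hout x hx'), max_eq_right (hout _ ?_)]
    rcases not_and_or.mp hx with hxa | hxb
    · rw [projIcc_of_le_left hab (not_le.mp hxa).le]; simp
    · rw [projIcc_of_right_le hab (not_le.mp hxb).le]; simp
  have := ((hg.to_restrict.comp (LipschitzWith.projIcc hab)).max_const 0)
  rw [mul_one] at this
  simpa only [Function.comp_def, domRestrict_apply, hclamp] using this

theorem exists_Ioo_pos_of_nonpos {F : ℝ → ℝ} (hF : Continuous F) {l t r : ℝ}
    (hlt : l ≤ t) (htr : t ≤ r) (hl : F l ≤ 0) (hr : F r ≤ 0) :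
    ∃ α ∈ Icc l t, ∃ β ∈ Icc t r, F α ≤ 0 ∧ F β ≤ 0 ∧ ∀ x ∈ Ioo α β, 0 < F x := by
  obtain ⟨α, ⟨hα, hFα⟩, hαmax⟩ :=
    (isCompact_Icc.inter_right (isClosed_le hF continuous_const)).exists_isGreatest
      ⟨l, ⟨le_rfl, hlt⟩, hl⟩
  obtain ⟨β, ⟨hβ, hFβ⟩, hβmin⟩ :=
    (isCompact_Icc.inter_right (isClosed_le hF continuous_const)).exists_isLeast
      ⟨r, ⟨htr, le_rfl⟩, hr⟩
  refine ⟨α, hα, β, hβ, hFα, hFβ, fun x hx => not_le.mp fun hFx => ?_⟩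
  rcases le_total x t with hxt | hxt
  · exact hx.1.not_ge (hαmax ⟨⟨hα.1.trans hx.1.le, hxt⟩, hFx⟩)
  · exact hx.2.not_ge (hβmin ⟨⟨hxt, hx.2.le.trans hβ.2⟩, hFx⟩)

theorem nonpos_of_deriv2_nonneg_where_pos {φ φ' φ'' : ℝ → ℝ} {α β : ℝ}
    (hφ : ∀ x, HasDerivAt φ (φ' x) x) (hφ' : ∀ x, HasDerivAt φ' (φ'' x) x)
    (hα : φ α ≤ 0) (hβ : φ β ≤ 0) (h : ∀ x ∈ Ioo α β, 0 < φ x → 0 ≤ φ'' x) :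
    ∀ t ∈ Icc α β, φ t ≤ 0 := by
  intro t ht
  by_contra! hφt
  have hc : Continuous φ := continuous_iff_continuousAt.mpr fun x => (hφ x).continuousAt
  obtain ⟨α₁, hα₁, β₁, hβ₁, hφα₁, hφβ₁, hpos⟩ :=
    exists_Ioo_pos_of_nonpos (F := φ) hc ht.1 ht.2 hα hβ
  -- on the component of `{φ > 0}` around `t`, `φ` is convex with nonpositive endpoint values
  have hconv : ConvexOn ℝ (Icc α₁ β₁) φ := by
    refine convexOn_of_hasDerivWithinAt2_nonneg (convex_Icc _ _) hc.continuousOn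
      (fun x _ => (hφ x).hasDerivWithinAt) (fun x _ => (hφ' x).hasDerivWithinAt) ?_
    rw [interior_Icc]
    exact fun x hx => h x ⟨hα₁.1.trans_lt hx.1, hx.2.trans_le hβ₁.2⟩ (hpos x hx)
  have := hconv.le_on_segment (left_mem_Icc.mpr (hα₁.2.trans hβ₁.1))
    (right_mem_Icc.mpr (hα₁.2.trans hβ₁.1))
    (by rw [segment_eq_Icc (hα₁.2.trans hβ₁.1)]; exact ⟨hα₁.2, hβ₁.1⟩)
  exact hφt.not_ge (this.trans (max_le hφα₁ hφβ₁))

theorem mul_exp_neg_div_le_of_le_add_mul {y c K s ν : ℝ} (hc : 0 ≤ c) (hK : 0 ≤ K)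
    (hs : 0 ≤ s) (hν : 0 < ν) (hy : y ≤ c + K * s) : y * exp (-s / ν) ≤ c + K * ν := by
  have hexp : exp (-s / ν) ≤ 1 :=
    exp_le_one_iff.mpr (div_nonpos_of_nonpos_of_nonneg (neg_nonpos.mpr hs) hν.le)
  have hs_exp : s * exp (-s / ν) ≤ ν := by
    have h1 : s / ν + 1 ≤ exp (s / ν) := add_one_le_exp _
    rw [neg_div, exp_neg, ← div_eq_mul_inv, div_le_iff₀ (exp_pos _)]
    rw [div_add_one hν.ne', div_le_iff₀ hν] at h1
    nlinarith
  nlinarith [mul_le_mul_of_nonneg_left hs_exp hK, mul_le_mul_of_nonneg_left hexp hc,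
    mul_le_mul_of_nonneg_right hy (exp_pos (-s / ν)).le]

theorem le_exp_barrier_of_le_sq_mul_deriv2 {v v' v'' : ℝ → ℝ} {ν α β : ℝ} (hν : 0 < ν)
    (hv : ∀ x, HasDerivAt v (v' x) x) (hv' : ∀ x, HasDerivAt v' (v'' x) x)
    (hα : 0 ≤ v α) (hβ : 0 ≤ v β) (hsub : ∀ x ∈ Ioo α β, v x ≤ ν ^ 2 * v'' x) :
    ∀ x ∈ Icc α β, v x ≤ v α * exp ((α - x) / ν) + v β * exp ((x - β) / ν) := by
  have hdecay : ∀ x, HasDerivAt (fun y => exp ((α - y) / ν)) (-exp ((α - x) / ν) / ν) x := by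
    intro x
    convert (((hasDerivAt_id' x).const_sub α).div_const ν).exp using 1
    ring
  have hgrowth : ∀ x, HasDerivAt (fun y => exp ((y - β) / ν)) (exp ((x - β) / ν) / ν) x := by
    intro x
    convert (((hasDerivAt_id' x).sub_const β).div_const ν).exp using 1
    ring
  set w : ℝ → ℝ := fun x => v α * exp ((α - x) / ν) + v β * exp ((x - β) / ν)
  set w' : ℝ → ℝ := fun x => (v β * exp ((x - β) / ν) - v α * exp ((α - x) / ν)) / ν
  have hw : ∀ x, HasDerivAt w (w' x) x := by
    intro x
    exact (((hdecay x).const_mul (v α)).add ((hgrowth x).const_mul (v β))).congr_deriv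
      (by ring)
  have hw' : ∀ x, HasDerivAt w' (w x / ν ^ 2) x := by
    intro x
    refine ((((hgrowth x).const_mul (v β)).sub
      ((hdecay x).const_mul (v α))).div_const ν).congr_deriv ?_
    field_simp
    ring
  intro x hx
  have := nonpos_of_deriv2_nonneg_where_pos (φ := fun x => v x - w x)
    (fun x => (hv x).sub (hw x)) (fun x => (hv' x).sub (hw' x)) ?_ ?_ ?_ x hx
  · simp only [w] at this
    linarith
  · simp only [w, sub_self, zero_div, exp_zero]
    nlinarith [exp_pos ((α - β) / ν)]
  · simp only [w, sub_self, zero_div, exp_zero]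
    nlinarith [exp_pos ((α - β) / ν)]
  · intro y hy hpos
    have := hsub y hy
    rw [sub_nonneg, ← mul_le_mul_iff_of_pos_left (by positivity : 0 < ν ^ 2),
      mul_div_cancel₀ _ (by positivity)]
    linarith

theorem LipschitzWith.le_add_mul_abs_sub {P : ℝ → ℝ} {K : ℝ≥0} (hP : LipschitzWith K P)
    (x y : ℝ) : P y ≤ P x + K * |y - x| := by
  have := hP.dist_le_mul y x
  rw [Real.dist_eq, Real.dist_eq] at this
  linarith [le_abs_self (P y - P x)]

theorem le_two_mul_of_le_sq_mul_deriv2_above_obstacle {v v' v'' P : ℝ → ℝ} {K : ℝ≥0}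
    {ν c : ℝ} (hν : 0 < ν) (hc : 0 < c)
    (hv : ∀ x, HasDerivAt v (v' x) x) (hv' : ∀ x, HasDerivAt v' (v'' x) x)
    (hv0 : ∀ x, 0 ≤ v x) (htop : Tendsto v atTop (𝓝 0)) (hbot : Tendsto v atBot (𝓝 0))
    (hP0 : ∀ x, 0 ≤ P x) (hP : LipschitzWith K P)
    (hsub : ∀ x, P x + c * ν < v x → v x ≤ ν ^ 2 * v'' x) (t : ℝ) :
    v t ≤ 2 * (P t + (c + K) * ν) := by
  by_cases hvt : v t ≤ P t + c * ν
  · nlinarith [hP0 t, K.coe_nonneg]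
  have hcν : 0 < c * ν := mul_pos hc hν
  set F : ℝ → ℝ := fun x => v x - (P x + c * ν)
  have hF : Continuous F :=
    (continuous_iff_continuousAt.mpr fun x => (hv x).continuousAt).sub
      (hP.continuous.add continuous_const)
  have hsmall : ∀ᶠ x in atTop ⊔ atBot, F x ≤ 0 := by
    filter_upwards [(htop.sup hbot).eventually_lt_const hcν] with x hx
    linarith [hP0 x]
  obtain ⟨l, hFl, hlt⟩ := ((eventually_sup.mp hsmall).2.and (eventually_le_atBot t)).exists
  obtain ⟨r, hFr, htr⟩ := ((eventually_sup.mp hsmall).1.and (eventually_ge_atTop t)).exists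
  obtain ⟨α, hα, β, hβ, hFα, hFβ, hpos⟩ := exists_Ioo_pos_of_nonpos hF hlt htr hFl hFr
  have hbarrier := le_exp_barrier_of_le_sq_mul_deriv2 hν hv hv' (hv0 α) (hv0 β)
    (fun x hx => hsub x (sub_pos.mp (hpos x hx))) t ⟨hα.2, hβ.1⟩
  have hend : ∀ y, F y ≤ 0 → v y * exp (-|y - t| / ν) ≤ P t + c * ν + K * ν := by
    intro y hFy
    refine mul_exp_neg_div_le_of_le_add_mul (by linarith [hP0 t]) K.coe_nonneg
      (abs_nonneg _) hν ?_
    have := hP.le_add_mul_abs_sub t y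
    simp only [F] at hFy
    linarith
  have hleft := hend α hFα
  rw [abs_of_nonpos (sub_nonpos.mpr hα.2), neg_neg] at hleft
  have hright := hend β hFβ
  rw [abs_of_nonneg (sub_nonneg.mpr hβ.1), neg_sub] at hright
  linarith

theorem sq_le_mul_deriv2_sq_of_stationary {η m p φ a A M u u' u'' : ℝ} (hη : 0 < η)
    (hmp : m ≤ p) (hp : 0 ≤ p) (ha : 0 ≤ a) (haA : a ≤ A) (hφ : |φ| ≤ M)
    (heq : (η ^ 3) ^ 2 * u'' + m * u - u ^ 3 + η ^ 3 * a * φ = 0)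
    (hu : p + (1 + A * M) * η ^ 2 < u ^ 2) :
    u ^ 2 ≤ (η ^ 2) ^ 2 * (2 * u' ^ 2 + 2 * u * u'') := by
  have hAM : 0 ≤ A * M := mul_nonneg (ha.trans haA) ((abs_nonneg φ).trans hφ)
  have hη_le : η ≤ |u| := by
    have : η ^ 2 ≤ u ^ 2 := by nlinarith
    simpa [abs_of_pos hη] using sq_le_sq.mp this
  have hforce : η * (a * φ * u) ≤ A * M * u ^ 2 := by
    have h1 : a * φ * u ≤ A * M * |u| := by
      calc a * φ * u ≤ a * (M * |u|) := by
            rw [mul_assoc]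
            refine mul_le_mul_of_nonneg_left ?_ ha
            calc φ * u ≤ |φ * u| := le_abs_self _
              _ = |φ| * |u| := abs_mul φ u
              _ ≤ M * |u| := mul_le_mul_of_nonneg_right hφ (abs_nonneg u)
        _ ≤ A * (M * |u|) :=
            mul_le_mul_of_nonneg_right haA (mul_nonneg ((abs_nonneg φ).trans hφ) (abs_nonneg u))
        _ = A * M * |u| := by ring
    calc η * (a * φ * u) ≤ η * (A * M * |u|) := mul_le_mul_of_nonneg_left h1 hη.le
      _ = A * M * (η * |u|) := by ring
      _ ≤ A * M * (|u| * |u|) := by gcongr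
      _ = A * M * u ^ 2 := by rw [← sq, sq_abs]
  have hη2 : 0 < η ^ 2 := by positivity
  have key : η ^ 2 * u ^ 2 ≤ η ^ 2 * ((η ^ 2) ^ 2 * (2 * u' ^ 2 + 2 * u * u'')) := by
    have hcubic : (η ^ 3) ^ 2 * (u * u'') = u ^ 4 - m * u ^ 2 - η ^ 2 * (η * (a * φ * u)) := by
      linear_combination u * heq
    nlinarith [sq_nonneg u, sq_nonneg u', mul_le_mul_of_nonneg_left hforce hη2.le,
      mul_le_mul_of_nonneg_left (by linarith : (1 + A * M) * η ^ 2 ≤ u ^ 2 - m) (sq_nonneg u)]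
  exact le_of_mul_le_mul_left key hη2

theorem sq_le_two_mul_of_stationary {μ f u : ℝ → ℝ} {K : ℝ≥0}
    (hK : LipschitzWith K fun x => max (μ x) 0) {M A η a : ℝ} (hM : ∀ x, |f x| ≤ M)
    (hη : 0 < η) (ha : 0 ≤ a) (haA : a ≤ A) (hu : ContDiff ℝ 2 u)
    (heq : ∀ x, (η ^ 3) ^ 2 * deriv (deriv u) x + μ x * u x - u x ^ 3 + η ^ 3 * a * f x = 0)
    (htop : Tendsto u atTop (𝓝 0)) (hbot : Tendsto u atBot (𝓝 0)) (x : ℝ) :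
    u x ^ 2 ≤ 2 * (max (μ x) 0 + (1 + A * M + K) * η ^ 2) := by
  have hu' : ∀ x, HasDerivAt u (deriv u x) x := fun x =>
    (hu.differentiable (by norm_num) x).hasDerivAt
  have hu'' : ∀ x, HasDerivAt (deriv u) (deriv (deriv u) x) x := fun x =>
    (hu.differentiable_deriv_two x).hasDerivAt
  have hv : ∀ x, HasDerivAt (fun y => u y ^ 2) (2 * u x * deriv u x) x := fun x =>
    ((hu' x).fun_pow 2).congr_deriv (by norm_num)
  have hv' : ∀ x, HasDerivAt (fun y => 2 * u y * deriv u y)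
      (2 * deriv u x ^ 2 + 2 * u x * deriv (deriv u) x) x := fun x =>
    (((hu' x).const_mul 2).mul (hu'' x)).congr_deriv (by ring)
  have hpow : ∀ l : Filter ℝ, Tendsto u l (𝓝 0) → Tendsto (fun y => u y ^ 2) l (𝓝 0) :=
    fun l hl => by simpa using hl.pow 2
  have hAM : 0 ≤ A * M := mul_nonneg (ha.trans haA) ((abs_nonneg _).trans (hM 0))
  refine le_two_mul_of_le_sq_mul_deriv2_above_obstacle (c := 1 + A * M) (pow_pos hη 2)
    (by linarith) hv hv' (fun y => sq_nonneg (u y)) (hpow _ htop) (hpow _ hbot)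
    (fun y => le_max_right _ _) hK (fun y hy => ?_) x
  exact sq_le_mul_deriv2_sq_of_stationary hη (le_max_left _ _) (le_max_right _ _) ha haA
    (hM y) (heq y) hy

namespace Hyp

variable {μ f : ℝ → ℝ} {ξ : ℝ}

theorem nonpos_of_le_abs (h : Hyp μ f ξ) {x : ℝ} (hx : ξ ≤ |x|) : μ x ≤ 0 := by
  have hanti : StrictAntiOn μ (Ici 0) :=
    strictAntiOn_of_deriv_neg (convex_Ici 0) h.μ_C1.continuous.continuousOn
      (by rw [interior_Ici]; exact fun y hy => h.μ_deriv_neg y hy)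
  have habs : μ |x| = μ x := by
    rcases abs_choice x with hx' | hx' <;> rw [hx']
    exact h.μ_even x
  rw [← habs, ← h.μ_ξ]
  exact hanti.antitoneOn h.ξ_pos.le (abs_nonneg x) hx

theorem exists_lipschitzWith_max_zero (h : Hyp μ f ξ) :
    ∃ K, LipschitzWith K fun x => max (μ x) 0 := by
  obtain ⟨K, hK⟩ := h.μ_C1.contDiffOn.exists_lipschitzOnWith one_ne_zero (convex_Icc (-ξ) ξ)
    isCompact_Icc
  refine ⟨K, hK.lipschitzWith_max_zero_of_nonpos_off_Ioo (by linarith [h.ξ_pos]) fun x hx => ?_⟩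
  exact h.nonpos_of_le_abs (le_abs'.mpr (by simpa only [mem_Ioo, not_and_or, not_lt] using hx))

end Hyp

/-- Refined uniform bound: `|u(x)| ≤ K (√(max(μ(x), 0)) + ε^{1/3})` for solutions of the
Euler–Lagrange equation tending to `0` at `±∞`, for `ε` small and `a ∈ [0, A]`. -/
theorem stmt12 (μ f : ℝ → ℝ) (ξ : ℝ) (h : Hyp μ f ξ) (A : ℝ) (hA : 0 < A) :
    ∃ ε₀ > (0:ℝ), ∃ K > (0:ℝ), ∀ ε a : ℝ, 0 < ε → ε ≤ ε₀ → 0 ≤ a → a ≤ A →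
      ∀ u : ℝ → ℝ, ContDiff ℝ 2 u →
        (∀ x : ℝ, ε ^ 2 * deriv (deriv u) x + μ x * u x - (u x) ^ 3 + ε * a * f x = 0) →
        Filter.Tendsto u Filter.atTop (𝓝 0) →
        Filter.Tendsto u Filter.atBot (𝓝 0) →
        ∀ x : ℝ, |u x| ≤ K * (Real.sqrt (max (μ x) 0) + ε ^ ((1:ℝ)/3)) := by
  obtain ⟨M, hM⟩ := h.f_bdd
  obtain ⟨L, hL⟩ := h.exists_lipschitzWith_max_zero
  have hAM : 0 ≤ A * M := mul_nonneg hA.le ((abs_nonneg _).trans (hM 0))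
  set D := 2 * (1 + A * M + L)
  have hD : 2 ≤ D := by linarith [L.coe_nonneg]
  refine ⟨1, one_pos, √D, by positivity, fun ε a hε _ ha haA u hu heq htop hbot x => ?_⟩
  set η := ε ^ ((1:ℝ) / 3)
  have hη : 0 < η := by positivity
  have hηε : η ^ 3 = ε := by
    rw [← Real.rpow_natCast, ← Real.rpow_mul hε.le]
    norm_num
  have hsq := sq_le_two_mul_of_stationary hL hM hη ha haA hu (by rw [hηε]; exact heq) htop hbot x
  set P := max (μ x) 0
  have hP : 0 ≤ P := le_max_right _ _
  refine abs_le_of_sq_le_sq ?_ (by positivity)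
  calc u x ^ 2 ≤ D * (P + η ^ 2) := by nlinarith
    _ ≤ D * (√P + η) ^ 2 := by
        gcongr
        nlinarith [Real.sq_sqrt hP, Real.sqrt_nonneg P]
    _ = (√D * (√P + η)) ^ 2 := by rw [mul_pow, Real.sq_sqrt (by positivity)]
end

section
/- Let α < 0 and for each s ∈ ℝ let σ₊(s) denote the unique positive real root of 2y³ + s·y + α = 0. Then: σ₊ is differentiable with σ₊'(s) < 0 for all s ∈ ℝ; for all s > 0 one has 0 < σ₊(s) < |α|/s, and s·σ₊(s) → |α| as s → +∞; for all s < 0 one has σ₊(s) > √(|s|/2), and σ₊(s) − √(|s|/2) → 0 as s → −∞; moreover σ₊ is convex on [0, ∞). -/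
open Filter Topology Set

/-!
On `(0, ∞)` the map `y ↦ -α / y - 2 y²`, which returns the coefficient `s` for which `y` is a
root, is a strictly decreasing bijection onto `ℝ` when `α < 0`; `σ₊` is its inverse. Hence `σ₊`
is continuous and strictly decreasing, and the inverse function theorem gives
`σ₊' = (α / σ₊² - 4 σ₊)⁻¹ = -σ₊² / (4 σ₊³ - α)`. The function `y ↦ y² / (4 y³ - α)` increases
as long as `2 y³ ≤ -α`, which holds exactly for `s ≥ 0`; so `σ₊'` increases there and `σ₊` is
convex. The asymptotics are read off the identities `s σ₊ = -α - 2 σ₊³` and, with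
`t = √(-s/2)`, `2 σ₊ (σ₊ - t)(σ₊ + t) = -α`.
-/

namespace CubicPositiveRoot

noncomputable def coeffOfRoot (α y : ℝ) : ℝ := -α / y - 2 * y ^ 2

noncomputable def rootDeriv (α y : ℝ) : ℝ := (α / y ^ 2 - 4 * y)⁻¹

def IsPosRootFn (α : ℝ) (σ : ℝ → ℝ) : Prop :=
  ∀ s, 0 < σ s ∧ 2 * σ s ^ 3 + s * σ s + α = 0

variable {α : ℝ}

theorem coeffOfRoot_eq_iff {s y : ℝ} (hy : y ≠ 0) :
    coeffOfRoot α y = s ↔ 2 * y ^ 3 + s * y + α = 0 := by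
  unfold coeffOfRoot
  constructor
  · rintro rfl
    field_simp
    ring
  · intro h
    field_simp
    linear_combination -h

theorem strictAntiOn_coeffOfRoot (hα : α ≤ 0) : StrictAntiOn (coeffOfRoot α) (Ioi 0) := by
  intro a (ha : 0 < a) b (hb : 0 < b) hab
  have h₁ : -α / b ≤ -α / a := div_le_div_of_nonneg_left (by linarith) ha hab.le
  have h₂ : a ^ 2 < b ^ 2 := pow_lt_pow_left₀ hab ha.le two_ne_zero
  unfold coeffOfRoot
  linarith

theorem hasDerivAt_coeffOfRoot {y : ℝ} (hy : y ≠ 0) :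
    HasDerivAt (coeffOfRoot α) (α / y ^ 2 - 4 * y) y := by
  have hd := ((hasDerivAt_inv hy).const_mul (-α)).sub ((hasDerivAt_pow 2 y).const_mul 2)
  simp only [← div_eq_mul_inv] at hd
  exact hd.congr_deriv (by norm_num; field_simp; ring)

theorem div_sq_sub_neg (hα : α ≤ 0) {y : ℝ} (hy : 0 < y) : α / y ^ 2 - 4 * y < 0 := by
  have : α / y ^ 2 ≤ 0 := div_nonpos_of_nonpos_of_nonneg hα (sq_nonneg y)
  linarith

theorem rootDeriv_neg (hα : α ≤ 0) {y : ℝ} (hy : 0 < y) : rootDeriv α y < 0 :=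
  inv_lt_zero.2 (div_sq_sub_neg hα hy)

theorem rootDeriv_le_rootDeriv {y₁ y₂ : ℝ} (hy₂ : 0 < y₂) (hy : y₂ ≤ y₁)
    (hy₁ : 2 * y₁ ^ 3 ≤ -α) : rootDeriv α y₁ ≤ rootDeriv α y₂ := by
  have hy₁' : 0 < y₁ := hy₂.trans_le hy
  have key {y : ℝ} (hy : 0 < y) : rootDeriv α y = -(y ^ 2 / (4 * y ^ 3 - α)) := by
    have : α / y ^ 2 - 4 * y = -(4 * y ^ 3 - α) / y ^ 2 := by
      field_simp
      ring
    rw [rootDeriv, this, inv_div, div_neg]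
  have hd₁ : 0 < 4 * y₁ ^ 3 - α := by nlinarith [pow_pos hy₁' 3]
  have hd₂ : 0 < 4 * y₂ ^ 3 - α := by nlinarith [pow_pos hy₂ 3, pow_le_pow_left₀ hy₂.le hy 3]
  rw [key hy₁', key hy₂, neg_le_neg_iff, div_le_div_iff₀ hd₂ hd₁]
  -- the difference of the two sides is `(y₁ - y₂)(-α (y₁ + y₂) - 4 y₁² y₂²)`
  have hc : 0 ≤ -α - 2 * y₁ ^ 3 := by linarith
  have hd : 0 ≤ y₁ - y₂ := sub_nonneg.2 hy
  nlinarith [mul_nonneg (mul_nonneg hc hd) (add_pos hy₁' hy₂).le,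
    mul_nonneg (mul_nonneg (sq_nonneg y₁) (sq_nonneg (y₁ - y₂))) (by positivity : 0 ≤ y₁ + 2 * y₂)]

namespace IsPosRootFn

variable {σ : ℝ → ℝ}

theorem coeffOfRoot_apply (h : IsPosRootFn α σ) (s : ℝ) : coeffOfRoot α (σ s) = s :=
  (coeffOfRoot_eq_iff (h s).1.ne').2 (h s).2

theorem apply_coeffOfRoot (h : IsPosRootFn α σ) (hα : α ≤ 0) {y : ℝ} (hy : 0 < y) :
    σ (coeffOfRoot α y) = y :=
  (strictAntiOn_coeffOfRoot hα).injOn (h _).1 hy (h.coeffOfRoot_apply _)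

theorem strictAnti (h : IsPosRootFn α σ) (hα : α ≤ 0) : StrictAnti σ := by
  intro s₁ s₂ hs
  rw [← (strictAntiOn_coeffOfRoot hα).lt_iff_gt (h s₁).1 (h s₂).1, h.coeffOfRoot_apply,
    h.coeffOfRoot_apply]
  exact hs

theorem continuous (h : IsPosRootFn α σ) (hα : α ≤ 0) : Continuous σ := by
  have hneg : Continuous fun s => -σ s := by
    refine continuous_iff_continuousAt.2 fun s => ?_
    refine continuousAt_of_monotoneOn_of_image_mem_nhds
      (fun a _ b _ hab => neg_le_neg ((h.strictAnti hα).antitone hab)) univ_mem ?_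
    refine mem_of_superset (Iio_mem_nhds (neg_lt_zero.2 (h s).1)) fun y (hy : y < 0) => ?_
    exact ⟨coeffOfRoot α (-y), trivial,
      by simp only [h.apply_coeffOfRoot hα (neg_pos.2 hy), neg_neg]⟩
  exact hneg.neg.congr fun s => neg_neg _

theorem hasDerivAt (h : IsPosRootFn α σ) (hα : α ≤ 0) (s : ℝ) :
    HasDerivAt σ (rootDeriv α (σ s)) s :=
  HasDerivAt.of_local_left_inverse (h.continuous hα).continuousAt
    (hasDerivAt_coeffOfRoot (h s).1.ne') (div_sq_sub_neg hα (h s).1).ne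
    (Eventually.of_forall h.coeffOfRoot_apply)

theorem differentiable (h : IsPosRootFn α σ) (hα : α ≤ 0) : Differentiable ℝ σ :=
  fun s => (h.hasDerivAt hα s).differentiableAt

theorem deriv_neg (h : IsPosRootFn α σ) (hα : α ≤ 0) (s : ℝ) : deriv σ s < 0 :=
  (h.hasDerivAt hα s).deriv ▸ rootDeriv_neg hα (h s).1

theorem lt_neg_div (h : IsPosRootFn α σ) {s : ℝ} (hs : 0 < s) : σ s < -α / s := by
  rw [lt_div_iff₀ hs]
  nlinarith [(h s).2, pow_pos (h s).1 3]

theorem tendsto_mul_atTop (h : IsPosRootFn α σ) :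
    Tendsto (fun s => s * σ s) atTop (𝓝 (-α)) := by
  have hσ : Tendsto σ atTop (𝓝 0) :=
    tendsto_of_tendsto_of_tendsto_of_le_of_le' tendsto_const_nhds
      (tendsto_const_nhds.div_atTop tendsto_id) (Eventually.of_forall fun s => (h s).1.le)
      ((eventually_gt_atTop 0).mono fun s hs => (h.lt_neg_div hs).le)
  have hlim : Tendsto (fun s => -α - 2 * σ s ^ 3) atTop (𝓝 (-α - 2 * 0 ^ 3)) :=
    tendsto_const_nhds.sub ((hσ.pow 3).const_mul 2)
  refine (hlim.congr fun s => ?_).trans (by norm_num)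
  linear_combination -(h s).2

theorem sqrt_lt (h : IsPosRootFn α σ) (hα : α < 0) {s : ℝ} (hs : s < 0) :
    Real.sqrt (|s| / 2) < σ s := by
  rw [abs_of_neg hs, Real.sqrt_lt' (h s).1]
  nlinarith [(h s).2, (h s).1]

theorem sub_sqrt_le (h : IsPosRootFn α σ) (hα : α < 0) {s : ℝ} (hs : s < 0) :
    σ s - Real.sqrt (|s| / 2) ≤ α / s := by
  set t := Real.sqrt (|s| / 2)
  have ht : t ^ 2 = -s / 2 := by
    rw [Real.sq_sqrt (by positivity), abs_of_neg hs]
  have hlt : t < σ s := h.sqrt_lt hα hs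
  have hfac : 2 * σ s * (σ s + t) * (σ s - t) = -α := by
    linear_combination (h s).2 - 2 * σ s * ht
  have hpos : 0 ≤ 2 * σ s * (σ s + t) + s := by nlinarith [(h s).1, Real.sqrt_nonneg (|s| / 2)]
  rw [le_div_iff_of_neg hs]
  nlinarith [mul_nonneg (sub_nonneg.2 hlt.le) hpos]

theorem tendsto_sub_sqrt_atBot (h : IsPosRootFn α σ) (hα : α < 0) :
    Tendsto (fun s => σ s - Real.sqrt (|s| / 2)) atBot (𝓝 0) := by
  have hbound : Tendsto (fun s => α / s) atBot (𝓝 0) :=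
    tendsto_const_nhds.div_atBot tendsto_id
  exact tendsto_of_tendsto_of_tendsto_of_le_of_le' tendsto_const_nhds hbound
    ((eventually_lt_atBot 0).mono fun s hs => sub_nonneg.2 (h.sqrt_lt hα hs).le)
    ((eventually_lt_atBot 0).mono fun s hs => h.sub_sqrt_le hα hs)

theorem convexOn_Ici (h : IsPosRootFn α σ) (hα : α ≤ 0) : ConvexOn ℝ (Ici 0) σ := by
  have hderiv : deriv σ = fun s => rootDeriv α (σ s) := funext fun s => (h.hasDerivAt hα s).deriv
  refine MonotoneOn.convexOn_of_deriv (convex_Ici 0) (h.continuous hα).continuousOn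
    (fun s _ => (h.hasDerivAt hα s).differentiableAt.differentiableWithinAt) ?_
  rw [interior_Ici, hderiv]
  intro s₁ (hs₁ : 0 < s₁) s₂ _ hs
  have hcube : 2 * σ s₁ ^ 3 ≤ -α := by nlinarith [(h s₁).2, mul_pos hs₁ (h s₁).1]
  exact rootDeriv_le_rootDeriv (h s₂).1 ((h.strictAnti hα).antitone hs) hcube

end IsPosRootFn

end CubicPositiveRoot

theorem stmt14_general (α : ℝ) (hα : α < 0) (σp : ℝ → ℝ)
    (hroot : ∀ s : ℝ, 0 < σp s ∧ 2 * (σp s) ^ 3 + s * σp s + α = 0) :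
    Differentiable ℝ σp ∧ (∀ s : ℝ, deriv σp s < 0) ∧
    (∀ s : ℝ, 0 < s → σp s < |α| / s) ∧
    Filter.Tendsto (fun s => s * σp s) Filter.atTop (𝓝 |α|) ∧
    (∀ s : ℝ, s < 0 → Real.sqrt (|s| / 2) < σp s) ∧
    Filter.Tendsto (fun s => σp s - Real.sqrt (|s| / 2)) Filter.atBot (𝓝 0) ∧
    ConvexOn ℝ (Set.Ici (0:ℝ)) σp := by
  have h : CubicPositiveRoot.IsPosRootFn α σp := hroot
  rw [abs_of_neg hα]
  exact ⟨h.differentiable hα.le, h.deriv_neg hα.le, fun s => h.lt_neg_div, h.tendsto_mul_atTop,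
    fun s => h.sqrt_lt hα, h.tendsto_sub_sqrt_atBot hα, h.convexOn_Ici hα.le⟩

/-- Properties of the positive branch `σ₊` of roots of `2y³ + s y + α = 0` (`α < 0`):
it is differentiable and strictly decreasing, satisfies `0 < σ₊(s) < |α|/s` for `s > 0` with
`s σ₊(s) → |α|` at `+∞`, satisfies `σ₊(s) > √(|s|/2)` for `s < 0` with
`σ₊(s) - √(|s|/2) → 0` at `-∞`, and is convex on `[0, ∞)`. -/
theorem stmt14 (α : ℝ) (hα : α < 0) (σp : ℝ → ℝ)
    (hroot : ∀ s : ℝ, 0 < σp s ∧ 2 * (σp s) ^ 3 + s * σp s + α = 0)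
    (huniq : ∀ s y : ℝ, 0 < y → 2 * y ^ 3 + s * y + α = 0 → y = σp s) :
    Differentiable ℝ σp ∧ (∀ s : ℝ, deriv σp s < 0) ∧
    (∀ s : ℝ, 0 < s → σp s < |α| / s) ∧
    Filter.Tendsto (fun s => s * σp s) Filter.atTop (𝓝 |α|) ∧
    (∀ s : ℝ, s < 0 → Real.sqrt (|s| / 2) < σp s) ∧
    Filter.Tendsto (fun s => σp s - Real.sqrt (|s| / 2)) Filter.atBot (𝓝 0) ∧
    ConvexOn ℝ (Set.Ici (0:ℝ)) σp :=
  stmt14_general α hα σp hroot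
end
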